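/- If N_2 = (2+o(1))ε²n and |E(K)| = (2+o(1))ε³n with ε → 0 and ε³n → ∞, then the probability that a fixed degree-2 vertex lies on a disjoint cycle (of any length) in the configuration model is at most (1+o(1))/(4ε³n) = o(1). -/

import Mathlib

open Filter

/-- The `b`-th half-edge of the degree-2 vertex `j` among the `2N₂ + 2E` half-edges of
the configuration model (vertex `j < N₂` owns half-edges `2j` and `2j+1`). -/
def halfEdge (N2 E : ℕ) (j : Fin N2) (b : Bool) : Fin (2 * N2 + 2 * E) :=
  ⟨2 * (j : ℕ) + (if b then 0 else 1), by
    have := j.isLt; cases b <;> simp <;> omega⟩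

/-- A uniform perfect matching on half-edges, encoded as a fixed-point free involution. -/
def IsMatching {n : ℕ} (σ : Equiv.Perm (Fin n)) : Prop :=
  ∀ i, σ i ≠ i ∧ σ (σ i) = i

/-- The event that the degree-2 vertex `0` lies on a cycle of length `k` consisting
entirely of degree-2 vertices. -/
def OnDisjointCycle (N2 E k : ℕ) (hN : 0 < N2)
    (σ : Equiv.Perm (Fin (2 * N2 + 2 * E))) : Prop :=
  ∃ (w : ZMod k → Fin N2) (b : ZMod k → Bool),
    Function.Injective w ∧ w 0 = ⟨0, hN⟩ ∧
    ∀ i : ZMod k, σ (halfEdge N2 E (w i) (b i)) =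
      halfEdge N2 E (w (i + 1)) (!b (i + 1))

/-!
A matching in which vertex `0` lies on a disjoint cycle of length `k` is determined by a
witness of the cycle (its vertices in order starting from `0`, and which half-edge of each is
used first: at most `2ᵏ (N₂-1)⋯(N₂-k+1)` choices) together with a matching of the other
`2N₂ + 2E - 2k` half-edges, and every such matching has at least two witnesses, the cycle and
its reversal. As the number `M m` of perfect matchings of `m` points satisfies
`(m+1) M m ≤ M (m+2)`, the resulting bounds decrease geometrically in `k` with ratio
`2N₂/(2N₂+2E-1)`, and summing gives probability at most `1/(2E-1)` whatever `N₂` is.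
Finally `2E - 1 = (4+o(1)) ε³n`.
-/

open Function Equiv

noncomputable def matchingCount (n : ℕ) : ℕ := Nat.card {σ : Perm (Fin n) // IsMatching σ}

section Extension

variable {m : ℕ} (j : Fin (m + 1)) (τ : Perm (Fin m))

def extendMatching : Perm (Fin (m + 2)) :=
  swap (Fin.last (m + 1)) j.castSucc *
    τ.viaFintypeEmbedding (j.succAboveEmb.trans Fin.castSuccEmb)

lemma extendMatching_last : extendMatching j τ (Fin.last (m + 1)) = j.castSucc := by
  rw [extendMatching, Perm.mul_apply, Perm.viaFintypeEmbedding_apply_notMem_range,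
    swap_apply_left]
  rintro ⟨y, hy⟩
  exact (Fin.castSucc_lt_last _).ne hy

lemma extendMatching_castSucc : extendMatching j τ j.castSucc = Fin.last (m + 1) := by
  rw [extendMatching, Perm.mul_apply, Perm.viaFintypeEmbedding_apply_notMem_range,
    swap_apply_right]
  rintro ⟨y, hy⟩
  exact Fin.succAbove_ne j y (Fin.castSucc_injective _ hy)

lemma extendMatching_castSucc_succAbove (y : Fin m) :
    extendMatching j τ (j.succAbove y).castSucc = (j.succAbove (τ y)).castSucc := by
  have h := Perm.viaFintypeEmbedding_apply_image τ (j.succAboveEmb.trans Fin.castSuccEmb) y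
  simp only [Embedding.trans_apply, Fin.succAboveEmb_apply, Fin.castSuccEmb_apply] at h
  rw [extendMatching, Perm.mul_apply, h, swap_apply_of_ne_of_ne (Fin.castSucc_lt_last _).ne
    (fun h' => Fin.succAbove_ne j _ (Fin.castSucc_injective _ h'))]

lemma IsMatching.extendMatching {τ : Perm (Fin m)} (hτ : IsMatching τ) :
    IsMatching (extendMatching j τ) := by
  intro x
  induction x using Fin.lastCases with
  | last => simp [extendMatching_last, extendMatching_castSucc, (Fin.castSucc_lt_last j).ne]
  | cast x =>
    induction x using j.succAboveCases with
    | x => simp [extendMatching_last, extendMatching_castSucc, (Fin.castSucc_lt_last j).ne']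
    | p y =>
      simp only [extendMatching_castSucc_succAbove, (hτ y).2, ne_eq, Fin.castSucc_inj,
        j.succAbove_right_inj, (hτ y).1, not_false_eq_true, and_self]

lemma extendMatching_injective :
    Injective fun p : Fin (m + 1) × Perm (Fin m) => extendMatching p.1 p.2 := by
  rintro ⟨j, τ⟩ ⟨j', τ'⟩ h
  have hj : j = j' := by
    simpa [extendMatching_last] using congr($h (Fin.last (m + 1)))
  subst hj
  refine Prod.ext rfl (Perm.ext fun y => ?_)
  simpa [extendMatching_castSucc_succAbove] using congr($h (j.succAbove y).castSucc)

end Extension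

lemma succ_mul_matchingCount_le (m : ℕ) :
    (m + 1) * matchingCount m ≤ matchingCount (m + 2) := by
  let f : Fin (m + 1) × {τ : Perm (Fin m) // IsMatching τ} →
      {σ : Perm (Fin (m + 2)) // IsMatching σ} :=
    fun p => ⟨extendMatching p.1 p.2, p.2.2.extendMatching p.1⟩
  have hf : Injective f := by
    rintro ⟨j, τ⟩ ⟨j', τ'⟩ h
    obtain ⟨rfl, hτ⟩ := Prod.mk.inj (extendMatching_injective congr(($h).1))
    exact Prod.ext rfl (Subtype.ext hτ)
  have h := Nat.card_le_card_of_injective f hf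
  rwa [Nat.card_prod, Nat.card_eq_fintype_card (α := Fin (m + 1)), Fintype.card_fin] at h

lemma IsMatching.apply_mem_compl {n : ℕ} {σ : Perm (Fin n)} (hσ : IsMatching σ)
    {S : Finset (Fin n)} (hS : ∀ x ∈ S, σ x ∈ S) (x : Fin n) : σ x ∉ S ↔ x ∉ S :=
  ⟨mt (hS x), fun hx hσx => hx ((hσ x).2 ▸ hS _ hσx)⟩

lemma IsMatching.permCongr_subtypePerm {n n' : ℕ} {σ : Perm (Fin n)} (hσ : IsMatching σ)
    {P : Fin n → Prop} (h : ∀ x, P (σ x) ↔ P x) (e : {x // P x} ≃ Fin n') :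
    IsMatching (e.permCongr (σ.subtypePerm h)) := by
  intro y
  obtain ⟨x, rfl⟩ := e.surjective y
  simp [Equiv.permCongr_apply, Subtype.ext_iff, hσ x.1]

lemma card_le_matchingCount_of_eqOn {n : ℕ} (S : Finset (Fin n)) (A : Finset (Perm (Fin n)))
    (hA : ∀ σ ∈ A, IsMatching σ ∧ ∀ x ∈ S, σ x ∈ S)
    (hAS : ∀ σ ∈ A, ∀ τ ∈ A, ∀ x ∈ S, σ x = τ x) :
    A.card ≤ matchingCount (n - S.card) := by
  obtain ⟨e⟩ : Nonempty ({x // x ∉ S} ≃ Fin (n - S.card)) :=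
    ⟨Fintype.equivFinOfCardEq (by simp [Fintype.card_subtype_compl])⟩
  have hcompl (σ : A) := (hA σ σ.2).1.apply_mem_compl (hA σ σ.2).2
  let restrict (σ : A) : {τ : Perm (Fin (n - S.card)) // IsMatching τ} :=
    ⟨e.permCongr (σ.1.subtypePerm (hcompl σ)), (hA σ σ.2).1.permCongr_subtypePerm _ e⟩
  have hinj : Injective restrict := by
    intro σ τ h
    have hsub : σ.1.subtypePerm (hcompl σ) = τ.1.subtypePerm (hcompl τ) :=
      e.permCongr.injective congr(($h).1)
    refine Subtype.ext (Perm.ext fun x => ?_)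
    by_cases hx : x ∈ S
    · exact hAS σ σ.2 τ τ.2 x hx
    · exact congr(($hsub ⟨x, hx⟩).1)
  simpa [matchingCount] using Nat.card_le_card_of_injective restrict hinj

lemma halfEdge_inj {N2 E : ℕ} {j j' : Fin N2} {c c' : Bool} :
    halfEdge N2 E j c = halfEdge N2 E j' c' ↔ j = j' ∧ c = c' := by
  refine ⟨fun h => ?_, fun h => h.1 ▸ h.2 ▸ rfl⟩
  have h := congrArg Fin.val h
  simp only [halfEdge] at h
  cases c <;> cases c' <;> simp at h <;> simp [Fin.ext_iff] <;> omega

/-- The condition in `OnDisjointCycle` on a given witness `(w, b)`. -/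
def IsCycleWitness (N2 E : ℕ) {k : ℕ} (w : ZMod k → Fin N2) (b : ZMod k → Bool)
    (σ : Perm (Fin (2 * N2 + 2 * E))) : Prop :=
  ∀ i, σ (halfEdge N2 E (w i) (b i)) = halfEdge N2 E (w (i + 1)) (!b (i + 1))

namespace IsCycleWitness

variable {N2 E k : ℕ} {w : ZMod k → Fin N2} {b : ZMod k → Bool}
  {σ : Perm (Fin (2 * N2 + 2 * E))}

lemma apply_not (hσ : IsMatching σ) (hc : IsCycleWitness N2 E w b σ) (i : ZMod k) :
    σ (halfEdge N2 E (w i) (!b i)) = halfEdge N2 E (w (i - 1)) (b (i - 1)) := by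
  rw [← sub_add_cancel i 1, ← hc, (hσ _).2, sub_add_cancel]

lemma apply (hσ : IsMatching σ) (hc : IsCycleWitness N2 E w b σ) (i : ZMod k) (c : Bool) :
    σ (halfEdge N2 E (w i) c) = if c = b i then halfEdge N2 E (w (i + 1)) (!b (i + 1))
      else halfEdge N2 E (w (i - 1)) (b (i - 1)) := by
  split_ifs with h
  · rw [h, hc]
  · rw [Bool.eq_not.mpr h, hc.apply_not hσ]

lemma reverse (hσ : IsMatching σ) (hc : IsCycleWitness N2 E w b σ) :
    IsCycleWitness N2 E (fun i => w (-i)) (fun i => !b (-i)) σ := fun i => by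
  simp only [hc.apply_not hσ, neg_add', Bool.not_not]

end IsCycleWitness

lemma card_isCycleWitness_le {N2 E k : ℕ} [NeZero k] {w : ZMod k → Fin N2} (hw : Injective w)
    (b : ZMod k → Bool) :
    Nat.card {σ // IsMatching σ ∧ IsCycleWitness N2 E w b σ} ≤
      matchingCount (2 * N2 + 2 * E - 2 * k) := by
  classical
  let S := Finset.univ.image fun p : ZMod k × Bool => halfEdge N2 E (w p.1) p.2
  have hS : S.card = 2 * k := by
    rw [Finset.card_image_of_injective _ fun p q h => ?_]
    · simp [ZMod.card, mul_comm]
    · obtain ⟨hw', hc⟩ := halfEdge_inj.mp h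
      exact Prod.ext (hw hw') hc
  rw [← hS, Nat.card_eq_fintype_card, Fintype.card_subtype]
  refine card_le_matchingCount_of_eqOn S _ (fun σ hσ => ?_) fun σ hσ τ hτ x hx => ?_
  · simp only [Finset.mem_filter, Finset.mem_univ, true_and] at hσ
    refine ⟨hσ.1, fun x hx => ?_⟩
    obtain ⟨⟨i, c⟩, -, rfl⟩ := Finset.mem_image.mp hx
    rw [hσ.2.apply hσ.1]
    split_ifs
    exacts [Finset.mem_image_of_mem _ (Finset.mem_univ (i + 1, _)),
      Finset.mem_image_of_mem _ (Finset.mem_univ (i - 1, _))]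
  · simp only [Finset.mem_filter, Finset.mem_univ, true_and] at hσ hτ
    obtain ⟨⟨i, c⟩, -, rfl⟩ := Finset.mem_image.mp hx
    rw [hσ.2.apply hσ.1, hτ.2.apply hτ.1]

lemma card_injective_apply_eq_le {α β : Type*} [Fintype α] [Fintype β] (a : α) (b : β) :
    Nat.card {f : α → β // Injective f ∧ f a = b} ≤
      (Fintype.card β - 1).descFactorial (Fintype.card α - 1) := by
  classical
  let restrict (f : {f : α → β // Injective f ∧ f a = b}) : {x // x ≠ a} ↪ {y // y ≠ b} :=
    ⟨fun x => ⟨f.1 x, fun h => x.2 (f.2.1 (h.trans f.2.2.symm))⟩,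
      fun x y h => Subtype.ext (f.2.1 congr(($h).1))⟩
  have hinj : Injective restrict := by
    intro f g h
    refine Subtype.ext (funext fun x => ?_)
    by_cases hx : x = a
    · rw [hx, f.2.2, g.2.2]
    · exact congr((($h) ⟨x, hx⟩).1)
  refine (Nat.card_le_card_of_injective restrict hinj).trans_eq ?_
  simp [Fintype.card_embedding_eq, Fintype.card_subtype_compl]

noncomputable def cycleBound (N2 E j : ℕ) : ℕ :=
  2 ^ (j + 1) * (N2 - 1).descFactorial j * matchingCount (2 * N2 + 2 * E - 2 * (j + 1))

lemma two_mul_card_onDisjointCycle_le (N2 E k : ℕ) (hN : 0 < N2) :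
    2 * Nat.card {σ // IsMatching σ ∧ OnDisjointCycle N2 E (k + 1) hN σ} ≤
      cycleBound N2 E k := by
  classical
  let s := Finset.univ.filter fun σ => IsMatching σ ∧ OnDisjointCycle N2 E (k + 1) hN σ
  let W := Finset.univ.filter fun w : ZMod (k + 1) → Fin N2 => Injective w ∧ w 0 = ⟨0, hN⟩
  let t := W ×ˢ (Finset.univ : Finset (ZMod (k + 1) → Bool))
  have hW : W.card ≤ (N2 - 1).descFactorial k := by
    simpa [W, ← Fintype.card_subtype, ← Nat.card_eq_fintype_card, Nat.card_fin] using
      card_injective_apply_eq_le (0 : ZMod (k + 1)) (⟨0, hN⟩ : Fin N2)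
  have hcount := Finset.card_mul_le_card_mul (fun σ q => IsCycleWitness N2 E q.1 q.2 σ)
    (s := s) (t := t) (m := 2) (n := matchingCount (2 * N2 + 2 * E - 2 * (k + 1)))
    (fun σ hσ => ?_) (fun q hq => ?_)
  · calc 2 * Nat.card {σ // IsMatching σ ∧ OnDisjointCycle N2 E (k + 1) hN σ}
        = s.card * 2 := by rw [Nat.card_eq_fintype_card, Fintype.card_subtype, mul_comm]
      _ ≤ t.card * matchingCount (2 * N2 + 2 * E - 2 * (k + 1)) := hcount
      _ ≤ _ := by
        rw [cycleBound, Finset.card_product, Finset.card_univ, Fintype.card_fun, ZMod.card,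
          Fintype.card_bool, mul_comm W.card]
        gcongr
  · obtain ⟨hσ, w, b, hw, hw0, hc⟩ := (Finset.mem_filter.mp hσ).2
    -- the cycle and its reversal are two distinct witnesses
    have hrev : ((w, b) : _ × _) ≠ (fun i => w (-i), fun i => !b (-i)) := fun h =>
      Bool.not_ne_self (b 0) (by simpa using congr(($h).2 0).symm)
    refine (Finset.card_pair hrev).symm.le.trans (Finset.card_le_card fun q hq => ?_)
    simp only [Finset.bipartiteAbove, Finset.mem_filter, Finset.mem_product, Finset.mem_univ,
      and_true, t, W, true_and]
    rcases Finset.mem_insert.mp hq with rfl | hq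
    · exact ⟨⟨hw, hw0⟩, hc⟩
    · obtain rfl := Finset.mem_singleton.mp hq
      exact ⟨⟨hw.comp neg_injective, by simpa using hw0⟩, IsCycleWitness.reverse hσ hc⟩
  · have hw := (Finset.mem_filter.mp (Finset.mem_product.mp hq).1).2.1
    refine le_trans ?_ (card_isCycleWitness_le hw q.2)
    rw [Nat.card_eq_fintype_card, Fintype.card_subtype]
    exact Finset.card_le_card fun σ hσ => by
      simp only [Finset.bipartiteBelow, Finset.mem_filter, s] at hσ ⊢
      exact ⟨hσ.1.1, hσ.1.2.1, hσ.2⟩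

lemma OnDisjointCycle.le {N2 E k : ℕ} [NeZero k] {hN : 0 < N2}
    {σ : Perm (Fin (2 * N2 + 2 * E))} (h : OnDisjointCycle N2 E k hN σ) : k ≤ N2 := by
  obtain ⟨w, -, hw, -⟩ := h
  simpa using Fintype.card_le_of_injective w hw

lemma card_onSomeDisjointCycle_le (N2 E : ℕ) (hN : 0 < N2) :
    Nat.card {σ // IsMatching σ ∧ ∃ k, 1 ≤ k ∧ OnDisjointCycle N2 E k hN σ} ≤
      ∑ j ∈ Finset.range N2,
        Nat.card {σ // IsMatching σ ∧ OnDisjointCycle N2 E (j + 1) hN σ} := by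
  classical
  simp only [Nat.card_eq_fintype_card, Fintype.card_subtype]
  refine (Finset.card_le_card fun σ hσ => ?_).trans Finset.card_biUnion_le
  obtain ⟨hσ, k, hk, hc⟩ := (Finset.mem_filter.mp hσ).2
  obtain ⟨j, rfl⟩ := Nat.exists_eq_add_of_le' hk
  simp only [Finset.mem_biUnion, Finset.mem_range, Finset.mem_filter, Finset.mem_univ, true_and]
  exact ⟨j, hc.le, hσ, hc⟩

lemma sum_range_mul_sub_le {a : ℕ → ℕ} {c d A : ℕ} (h0 : a 0 * c ≤ A)
    (hstep : ∀ j, a (j + 1) * c ≤ d * a j) (n : ℕ) :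
    (∑ j ∈ Finset.range n, a j) * (c - d) ≤ A := by
  suffices h : (∑ j ∈ Finset.range n, a j) * c ≤ A + d * ∑ j ∈ Finset.range n, a j by
    rw [Nat.mul_sub, mul_comm _ d]; omega
  cases n with
  | zero => simp
  | succ n =>
    calc (∑ j ∈ Finset.range (n + 1), a j) * c
        = a 0 * c + ∑ j ∈ Finset.range n, a (j + 1) * c := by
          rw [Finset.sum_range_succ', add_mul, Finset.sum_mul, add_comm]
      _ ≤ A + d * ∑ j ∈ Finset.range n, a j := by
          rw [Finset.mul_sum]; exact add_le_add h0 (Finset.sum_le_sum fun j _ => hstep j)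
      _ ≤ A + d * ∑ j ∈ Finset.range (n + 1), a j := by
          rw [Finset.sum_range_succ, mul_add]; omega

lemma cycleBound_zero_mul_le {N2 : ℕ} (hN : 0 < N2) (E : ℕ) :
    cycleBound N2 E 0 * (2 * N2 + 2 * E - 1) ≤ 2 * matchingCount (2 * N2 + 2 * E) := by
  have h := succ_mul_matchingCount_le (2 * N2 + 2 * E - 2)
  rw [show 2 * N2 + 2 * E - 2 + 1 = 2 * N2 + 2 * E - 1 by omega,
    show 2 * N2 + 2 * E - 2 + 2 = 2 * N2 + 2 * E by omega] at h
  simp only [cycleBound, zero_add, pow_one, Nat.descFactorial_zero, mul_one]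
  linarith

lemma cycleBound_succ_mul_le (N2 : ℕ) {E : ℕ} (hE : 1 ≤ E) (j : ℕ) :
    cycleBound N2 E (j + 1) * (2 * N2 + 2 * E - 1) ≤ 2 * N2 * cycleBound N2 E j := by
  rcases lt_or_ge (N2 - 1) (j + 1) with hj | hj
  · rw [cycleBound, Nat.descFactorial_eq_zero_iff_lt.mpr hj]; simp
  set p := 2 * N2 + 2 * E - 2 * (j + 2)
  have hp : 2 * N2 + 2 * E - 2 * (j + 1) = p + 2 := by omega
  have hratio : (N2 - 1 - j) * (2 * N2 + 2 * E - 1) ≤ N2 * (p + 1) := by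
    obtain ⟨u, hu⟩ : ∃ u, N2 = u + j + 2 := ⟨N2 - j - 2, by omega⟩
    obtain ⟨e, rfl⟩ : ∃ e, E = e + 1 := ⟨E - 1, by omega⟩
    simp only [hu, p]
    rw [show u + j + 2 - 1 - j = u + 1 by omega,
      show 2 * (u + j + 2) + 2 * (e + 1) - 1 = 2 * u + 2 * j + 2 * e + 5 by omega,
      show 2 * (u + j + 2) + 2 * (e + 1) - 2 * (j + 2) = 2 * u + 2 * e + 2 by omega]
    nlinarith
  calc cycleBound N2 E (j + 1) * (2 * N2 + 2 * E - 1)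
      = 2 ^ (j + 1) * (N2 - 1).descFactorial j * 2 *
          ((N2 - 1 - j) * (2 * N2 + 2 * E - 1)) * matchingCount p := by
        rw [cycleBound, Nat.descFactorial_succ, pow_succ]; ring
    _ ≤ 2 ^ (j + 1) * (N2 - 1).descFactorial j * 2 * (N2 * (p + 1)) * matchingCount p := by
        gcongr
    _ = 2 * N2 * (2 ^ (j + 1) * (N2 - 1).descFactorial j * ((p + 1) * matchingCount p)) := by
        ring
    _ ≤ 2 * N2 * cycleBound N2 E j := by
        rw [cycleBound, hp]; gcongr; exact succ_mul_matchingCount_le p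

lemma card_onSomeDisjointCycle_mul_le (N2 : ℕ) {E : ℕ} (hN : 0 < N2) (hE : 1 ≤ E) :
    Nat.card {σ // IsMatching σ ∧ ∃ k, 1 ≤ k ∧ OnDisjointCycle N2 E k hN σ} * (2 * E - 1) ≤
      matchingCount (2 * N2 + 2 * E) := by
  have hgeom :=
    sum_range_mul_sub_le (cycleBound_zero_mul_le hN E) (cycleBound_succ_mul_le N2 hE) N2
  rw [show 2 * N2 + 2 * E - 1 - 2 * N2 = 2 * E - 1 by omega] at hgeom
  have hcycles : 2 * Nat.card {σ // IsMatching σ ∧ ∃ k, 1 ≤ k ∧ OnDisjointCycle N2 E k hN σ} ≤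
      ∑ j ∈ Finset.range N2, cycleBound N2 E j :=
    calc _ ≤ 2 * ∑ j ∈ Finset.range N2,
          Nat.card {σ // IsMatching σ ∧ OnDisjointCycle N2 E (j + 1) hN σ} := by
          gcongr; exact card_onSomeDisjointCycle_le N2 E hN
      _ ≤ _ := by
          rw [Finset.mul_sum]
          exact Finset.sum_le_sum fun j _ => two_mul_card_onDisjointCycle_le N2 E j hN
  nlinarith

lemma prob_onSomeDisjointCycle_le (N2 : ℕ) {E : ℕ} (hN : 0 < N2) (hE : 1 ≤ E) :
    (Nat.card {σ : Perm (Fin (2 * N2 + 2 * E)) //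
        IsMatching σ ∧ ∃ k, 1 ≤ k ∧ OnDisjointCycle N2 E k hN σ} : ℝ) /
      Nat.card {σ : Perm (Fin (2 * N2 + 2 * E)) // IsMatching σ} ≤ 1 / (2 * E - 1) := by
  have h := card_onSomeDisjointCycle_mul_le N2 hN hE
  have hE' : (1 : ℝ) ≤ E := by exact_mod_cast hE
  have hcast : ((2 * E - 1 : ℕ) : ℝ) = 2 * E - 1 := by
    push_cast [Nat.cast_sub (by omega : 1 ≤ 2 * E)]; ring
  rcases (Nat.card {σ : Perm (Fin (2 * N2 + 2 * E)) // IsMatching σ}).eq_zero_or_pos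
    with h0 | hpos
  · rw [h0, Nat.cast_zero, div_zero]; exact (one_div_pos.mpr (by linarith)).le
  rw [div_le_div_iff₀ (by exact_mod_cast hpos) (by linarith), one_mul, ← hcast]
  exact_mod_cast h

theorem prob_on_any_cycle_general (ε : ℕ → ℝ) (N2 E : ℕ → ℕ) (hN : ∀ n, 0 < N2 n)
    (hε3 : Tendsto (fun n => ε n ^ 3 * n) atTop atTop)
    (hE : Tendsto (fun n => (E n : ℝ) / (ε n ^ 3 * n)) atTop (nhds 2))
    (P : ℕ → ℝ)
    (hP : ∀ n, P n =
      (Nat.card {σ : Equiv.Perm (Fin (2 * N2 n + 2 * E n)) //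
          IsMatching σ ∧ ∃ k, 1 ≤ k ∧ OnDisjointCycle (N2 n) (E n) k (hN n) σ} : ℝ) /
        (Nat.card {σ : Equiv.Perm (Fin (2 * N2 n + 2 * E n)) // IsMatching σ})) :
    (∀ c : ℝ, 1 < c → ∀ᶠ n in atTop, P n ≤ c / (4 * ε n ^ 3 * n)) ∧
      Tendsto P atTop (nhds 0) := by
  have hx := hε3.eventually_gt_atTop 0
  have hEtop : Tendsto (fun n => (E n : ℝ)) atTop atTop :=
    (hE.pos_mul_atTop two_pos hε3).congr' (hx.mono fun n hn => div_mul_cancel₀ _ hn.ne')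
  have hE1 : ∀ᶠ n in atTop, (1 : ℝ) ≤ E n := hEtop.eventually_ge_atTop 1
  have hPle : ∀ᶠ n in atTop, P n ≤ 1 / (2 * E n - 1) := hE1.mono fun n hn =>
    (hP n).trans_le (prob_onSomeDisjointCycle_le _ _ (by exact_mod_cast hn))
  have hratio : Tendsto (fun n => (2 * E n - 1) / (ε n ^ 3 * n)) atTop (nhds 4) := by
    have h := (hE.const_mul 2).sub ((tendsto_const_nhds (x := (1 : ℝ))).div_atTop hε3)
    rw [show (2 : ℝ) * 2 - 0 = 4 by norm_num] at h
    refine h.congr' (hx.mono fun n hn => ?_)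
    field_simp
  refine ⟨fun c hc => ?_, ?_⟩
  · have h4c : 4 / c < 4 := div_lt_self four_pos hc
    filter_upwards [hratio.eventually (eventually_gt_nhds h4c), hPle, hE1, hx]
      with n hratio_n hPn hEn hxn
    refine hPn.trans ?_
    rw [div_lt_div_iff₀ (by linarith) hxn] at hratio_n
    rw [div_le_div_iff₀ (by linarith) (by linarith)]
    nlinarith
  · have hupper : Tendsto (fun n => 1 / (2 * (E n : ℝ) - 1)) atTop (nhds 0) :=
      tendsto_const_nhds.div_atTop
        (tendsto_atTop_add_const_right _ _ (hEtop.const_mul_atTop two_pos))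
    exact squeeze_zero' (Eventually.of_forall fun n => by rw [hP n]; positivity) hPle hupper

/-- If `N₂ = (2+o(1))ε²n` and `|E(K)| = (2+o(1))ε³n` with `ε → 0` and `ε³n → ∞`, then
the probability that a fixed degree-2 vertex lies on a disjoint cycle (of any length)
in the configuration model is at most `(1+o(1))/(4ε³n)`, and in particular `o(1)`. -/
theorem prob_on_any_cycle (ε : ℕ → ℝ) (N2 E : ℕ → ℕ) (hN : ∀ n, 0 < N2 n)
    (hεpos : ∀ n, 0 < ε n)
    (hε0 : Tendsto ε atTop (nhds 0))
    (hε3 : Tendsto (fun n => ε n ^ 3 * n) atTop atTop)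
    (hN2 : Tendsto (fun n => (N2 n : ℝ) / (ε n ^ 2 * n)) atTop (nhds 2))
    (hE : Tendsto (fun n => (E n : ℝ) / (ε n ^ 3 * n)) atTop (nhds 2))
    (P : ℕ → ℝ)
    (hP : ∀ n, P n =
      (Nat.card {σ : Equiv.Perm (Fin (2 * N2 n + 2 * E n)) //
          IsMatching σ ∧ ∃ k, 1 ≤ k ∧ OnDisjointCycle (N2 n) (E n) k (hN n) σ} : ℝ) /
        (Nat.card {σ : Equiv.Perm (Fin (2 * N2 n + 2 * E n)) // IsMatching σ})) :
    (∀ c : ℝ, 1 < c → ∀ᶠ n in atTop, P n ≤ c / (4 * ε n ^ 3 * n)) ∧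
      Tendsto P atTop (nhds 0) :=
  prob_on_any_cycle_general ε N2 E hN hε3 hE P hP
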